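/- arXiv:1202.1237 — 6 statements merged into one kernel-verified Lean document; each statement's English description precedes it below -/
import Mathlib

section
/- For every nonnegative integer n and real (or polynomial variable) x, the Legendre polynomial satisfies P_{2n}(x) = \sum_{k=0}^{n} \binom{n}{k} \binom{-1/2 - n}{k} (1 - x^2)^k. -/
open Polynomial Finset

/-- The Legendre polynomials over `ℚ`, defined by the three-term recurrence
`P₀ = 1`, `P₁ = X`, `(n+2)·P_{n+2} = (2n+3)·X·P_{n+1} - (n+1)·P_n`. -/
noncomputable def legendreP : ℕ → Polynomial ℚ
  | 0 => 1
  | 1 => X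
  | n + 2 => C ((n + 2 : ℚ))⁻¹ *
      (C (2 * (n : ℚ) + 3) * X * legendreP (n + 1) - C ((n : ℚ) + 1) * legendreP n)

/-- The generalized binomial coefficient `a(a-1)⋯(a-k+1)/k!`. -/
def gchoose (a : ℚ) (k : ℕ) : ℚ :=
  (∏ i ∈ Finset.range k, (a - i)) / (Nat.factorial k)

/-!
The even formula is proved together with its odd companion
`P_{2n+1}(x) = x ∑_k C(n,k) C(-3/2-n,k) (1-x²)^k` by induction on `n`. Writing `y = 1 - x²`,
the three-term recurrence turns each inductive step into a linear relation between sums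
`∑_k C(n,k) C(a,k) y^k`, which holds coefficientwise by the contiguity relations of
`C(a,k)` in `a` and in `k` and of `C(n,k)` in `n`.
-/

lemma gchoose_eq_descPochhammer_eval (a : ℚ) (k : ℕ) :
    gchoose a k = (descPochhammer ℚ k).eval a / k.factorial := by
  rw [gchoose, descPochhammer_eval_eq_prod_range]

@[simp]
lemma gchoose_zero (a : ℚ) : gchoose a 0 = 1 := by simp [gchoose]

lemma gchoose_succ_mul (a : ℚ) (k : ℕ) :
    gchoose a (k + 1) * (k + 1) = gchoose a k * (a - k) := by
  simp only [gchoose_eq_descPochhammer_eval, descPochhammer_succ_eval, Nat.factorial_succ]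
  field_simp
  push_cast
  ring

lemma gchoose_sub_one_mul (a : ℚ) (k : ℕ) :
    gchoose (a - 1) k * a = gchoose a k * (a - k) := by
  have h := congrArg (eval a) (descPochhammer_succ_left ℚ k)
  rw [descPochhammer_succ_eval, eval_mul, eval_comp] at h
  simp only [gchoose_eq_descPochhammer_eval, eval_sub, eval_X, eval_one] at h ⊢
  rw [div_mul_eq_mul_div, div_mul_eq_mul_div, h, mul_comm]

lemma cast_choose_mul_succ {R : Type*} [CommRing R] (n k : ℕ) :
    (n.choose k : R) * (n + 1) = ((n + 1).choose k) * (n + 1 - k) := by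
  rcases le_or_gt k (n + 1) with h | h
  · have := congrArg (Nat.cast : ℕ → R) (Nat.choose_mul_succ_eq n k)
    push_cast [Nat.cast_sub h] at this
    exact this
  · simp [Nat.choose_eq_zero_of_lt h, Nat.choose_eq_zero_of_lt (by omega : n < k)]

lemma cast_choose_succ_right_mul {R : Type*} [CommRing R] (n k : ℕ) :
    (n.choose (k + 1) : R) * (k + 1) = (n.choose k) * (n - k) := by
  rcases le_or_gt k n with h | h
  · have := congrArg (Nat.cast : ℕ → R) (Nat.choose_succ_right_eq n k)
    push_cast [Nat.cast_sub h] at this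
    exact this
  · simp [Nat.choose_eq_zero_of_lt h, Nat.choose_eq_zero_of_lt (by omega : n < k + 1)]

def binomProdSum (n : ℕ) (a y : ℚ) : ℚ :=
  ∑ k ∈ range (n + 1), (n.choose k : ℚ) * gchoose a k * y ^ k

lemma binomProdSum_eq_sum_range {n m : ℕ} (h : n ≤ m) (a y : ℚ) :
    binomProdSum n a y = ∑ k ∈ range (m + 1), (n.choose k : ℚ) * gchoose a k * y ^ k := by
  refine sum_subset (range_subset_range.2 (by omega)) fun k _ hk => ?_
  rw [Nat.choose_eq_zero_of_lt (by simpa using hk)]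
  simp

lemma binomProdSum_eq_one_add {n m : ℕ} (h : n ≤ m) (a y : ℚ) :
    binomProdSum n a y =
      1 + ∑ k ∈ range m, (n.choose (k + 1) : ℚ) * gchoose a (k + 1) * y ^ (k + 1) := by
  rw [binomProdSum_eq_sum_range h, sum_range_succ', add_comm]
  simp

lemma choose_mul_gchoose_odd_step (n k : ℕ) :
    (4 * n + 5) * ((n + 1).choose k : ℚ) * gchoose (-3/2 - n) k
        - (2 * n + 2) * (n.choose k) * gchoose (-3/2 - n) k
      = (2 * n + 3) * ((n + 1).choose k) * gchoose (-5/2 - n) k := by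
  have hg := gchoose_sub_one_mul (-3/2 - n) k
  rw [show (-3/2 - n : ℚ) - 1 = -5/2 - n by ring] at hg
  have hc := cast_choose_mul_succ (R := ℚ) n k
  have ha : (-3/2 - n : ℚ) ≠ 0 := by linarith [n.cast_nonneg (α := ℚ)]
  refine mul_left_cancel₀ ha ?_
  linear_combination (-(2 * n + 3) * ((n + 1).choose k : ℚ)) * hg
    + ((2 * n + 3) * gchoose (-3/2 - n) k) * hc

lemma choose_mul_gchoose_even_step (n k : ℕ) :
    (4 * n + 3) * ((n.choose (k + 1) : ℚ) * gchoose (-3/2 - n) (k + 1)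
        - (n.choose k) * gchoose (-3/2 - n) k)
      - (2 * n + 1) * (n.choose (k + 1)) * gchoose (-1/2 - n) (k + 1)
      = (2 * n + 2) * ((n + 1).choose (k + 1)) * gchoose (-3/2 - n) (k + 1) := by
  have hg := gchoose_succ_mul (-3/2 - n) k
  have hg' := gchoose_sub_one_mul (-1/2 - n) (k + 1)
  rw [show (-1/2 - n : ℚ) - 1 = -3/2 - n by ring] at hg'
  have hc := cast_choose_succ_right_mul (R := ℚ) n k
  have hc' : ((n + 1).choose (k + 1) : ℚ) = n.choose k + n.choose (k + 1) := by
    exact_mod_cast Nat.choose_succ_succ n k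
  have hd : (-3/2 - n - k : ℚ) ≠ 0 := by
    linarith [n.cast_nonneg (α := ℚ), k.cast_nonneg (α := ℚ)]
  push_cast at hg'
  refine mul_left_cancel₀ hd ?_
  linear_combination ((4 * n + 3) * (n.choose k : ℚ)) * hg
    + ((2 * n + 1) * (n.choose (k + 1) : ℚ)) * hg'
    + (-(2 * n + 1) * gchoose (-3/2 - n) (k + 1)) * hc
    + (-(2 * n + 2) * gchoose (-3/2 - n) (k + 1) * (-3/2 - n - k)) * hc'

lemma binomProdSum_odd_step (n : ℕ) (y : ℚ) :
    (2 * n + 3) * binomProdSum (n + 1) (-5/2 - n) y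
      = (4 * n + 5) * binomProdSum (n + 1) (-3/2 - n) y
        - (2 * n + 2) * binomProdSum n (-3/2 - n) y := by
  rw [binomProdSum, binomProdSum, binomProdSum_eq_sum_range (Nat.le_succ n), mul_sum, mul_sum,
    mul_sum, ← sum_sub_distrib]
  refine sum_congr rfl fun k _ => ?_
  linear_combination -y ^ k * choose_mul_gchoose_odd_step n k

lemma binomProdSum_even_step (n : ℕ) (y : ℚ) :
    (2 * n + 2) * binomProdSum (n + 1) (-3/2 - n) y
      = (4 * n + 3) * (1 - y) * binomProdSum n (-3/2 - n) y
        - (2 * n + 1) * binomProdSum n (-1/2 - n) y := by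
  have hy : y * binomProdSum n (-3/2 - n) y
      = ∑ k ∈ range (n + 1), (n.choose k : ℚ) * gchoose (-3/2 - n) k * y ^ (k + 1) := by
    rw [binomProdSum, mul_sum]
    exact sum_congr rfl fun k _ => by ring
  have hcoeff : ∑ k ∈ range (n + 1),
      ((4 * n + 3) * ((n.choose (k + 1) : ℚ) * gchoose (-3/2 - n) (k + 1) * y ^ (k + 1))
        - (4 * n + 3) * ((n.choose k : ℚ) * gchoose (-3/2 - n) k * y ^ (k + 1))
        - (2 * n + 1) * ((n.choose (k + 1) : ℚ) * gchoose (-1/2 - n) (k + 1) * y ^ (k + 1)))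
      = ∑ k ∈ range (n + 1),
        (2 * n + 2) * (((n + 1).choose (k + 1) : ℚ) * gchoose (-3/2 - n) (k + 1) * y ^ (k + 1)) :=
    sum_congr rfl fun k _ => by
      linear_combination y ^ (k + 1) * choose_mul_gchoose_even_step n k
  rw [sum_sub_distrib, sum_sub_distrib, ← mul_sum, ← mul_sum, ← mul_sum, ← mul_sum] at hcoeff
  linear_combination (2 * n + 2 : ℚ) * binomProdSum_eq_one_add (le_refl (n + 1)) (-3/2 - n) y
    - (4 * n + 3 : ℚ) * binomProdSum_eq_one_add (Nat.le_succ n) (-3/2 - n) y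
    + (2 * n + 1 : ℚ) * binomProdSum_eq_one_add (Nat.le_succ n) (-1/2 - n) y
    + (4 * n + 3 : ℚ) * hy - hcoeff

lemma eval_legendreP_add_two (n : ℕ) (x : ℚ) :
    (n + 2) * (legendreP (n + 2)).eval x
      = (2 * n + 3) * x * (legendreP (n + 1)).eval x - (n + 1) * (legendreP n).eval x := by
  rw [legendreP]
  simp only [eval_mul, eval_sub, eval_C, eval_X]
  field_simp

lemma eval_legendreP_two_mul_add_two {n : ℕ} {x : ℚ}
    (h_even : (legendreP (2 * n)).eval x = binomProdSum n (-1/2 - n) (1 - x ^ 2))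
    (h_odd : (legendreP (2 * n + 1)).eval x = x * binomProdSum n (-3/2 - n) (1 - x ^ 2)) :
    (legendreP (2 * n + 2)).eval x = binomProdSum (n + 1) (-3/2 - n) (1 - x ^ 2) := by
  have hrec : (2 * n + 2 : ℚ) * (legendreP (2 * n + 2)).eval x
      = (4 * n + 3) * x * (legendreP (2 * n + 1)).eval x
        - (2 * n + 1) * (legendreP (2 * n)).eval x := by
    have := eval_legendreP_add_two (2 * n) x
    push_cast at this
    linear_combination this
  refine mul_left_cancel₀ (a := (2 * n + 2 : ℚ)) (by positivity) ?_
  linear_combination hrec + (4 * n + 3) * x * h_odd - (2 * n + 1) * h_even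
    - binomProdSum_even_step n (1 - x ^ 2)

lemma eval_legendreP_two_mul_add_three {n : ℕ} {x : ℚ}
    (h_odd : (legendreP (2 * n + 1)).eval x = x * binomProdSum n (-3/2 - n) (1 - x ^ 2))
    (h_even : (legendreP (2 * n + 2)).eval x = binomProdSum (n + 1) (-3/2 - n) (1 - x ^ 2)) :
    (legendreP (2 * n + 3)).eval x = x * binomProdSum (n + 1) (-5/2 - n) (1 - x ^ 2) := by
  have hrec : (2 * n + 3 : ℚ) * (legendreP (2 * n + 3)).eval x
      = (4 * n + 5) * x * (legendreP (2 * n + 2)).eval x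
        - (2 * n + 2) * (legendreP (2 * n + 1)).eval x := by
    have := eval_legendreP_add_two (2 * n + 1) x
    push_cast at this
    linear_combination this
  refine mul_left_cancel₀ (a := (2 * n + 3 : ℚ)) (by positivity) ?_
  linear_combination hrec + (4 * n + 5) * x * h_even - (2 * n + 2) * h_odd
    - x * binomProdSum_odd_step n (1 - x ^ 2)

lemma eval_legendreP_even_odd (n : ℕ) (x : ℚ) :
    (legendreP (2 * n)).eval x = binomProdSum n (-1/2 - n) (1 - x ^ 2) ∧
      (legendreP (2 * n + 1)).eval x = x * binomProdSum n (-3/2 - n) (1 - x ^ 2) := by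
  induction n with
  | zero => simp [legendreP, binomProdSum]
  | succ n ih =>
    obtain ⟨h_even, h_odd⟩ := ih
    have h_even' := eval_legendreP_two_mul_add_two h_even h_odd
    have h_odd' := eval_legendreP_two_mul_add_three h_odd h_even'
    have ha : -1/2 - ((n + 1 : ℕ) : ℚ) = -3/2 - n := by push_cast; ring
    have hb : -3/2 - ((n + 1 : ℕ) : ℚ) = -5/2 - n := by push_cast; ring
    rw [ha, hb, show 2 * (n + 1) = 2 * n + 2 by ring]
    exact ⟨h_even', h_odd'⟩

theorem legendre_even_sum (n : ℕ) (x : ℚ) :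
    (legendreP (2 * n)).eval x =
      ∑ k ∈ Finset.range (n + 1),
        (n.choose k : ℚ) * gchoose (-1/2 - (n : ℚ)) k * (1 - x ^ 2) ^ k :=
  (eval_legendreP_even_odd n x).1
end

section
/- Let p be an odd prime and let m be an integer with 1 \le m \le (p-1)/2. Then the Legendre polynomials satisfy the congruence P_{p-1-m}(x) \equiv P_m(x) (mod p), i.e., all coefficients of P_{p-1-m}(x) - P_m(x), viewed as polynomials with coefficients in Z localized at p (or after clearing denominators coprime to p), are divisible by p. -/
open Polynomial Finset

/-- A rational number is `p`-integral if `p` does not divide its denominator. -/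
def pInt (p : ℕ) (r : ℚ) : Prop := ¬ (p ∣ r.den)

/-- Congruence modulo `p` in the ring of `p`-integral rationals:
`r ≡ s (mod p)` iff `r - s = p·c` for some `p`-integral rational `c`. -/
def pCong (p : ℕ) (r s : ℚ) : Prop := ∃ c : ℚ, pInt p c ∧ r - s = p * c

/-!
For `n < p` the Legendre polynomials have `p`-integral coefficients, so they reduce to
polynomials `Q n ∈ 𝔽_p[X]` satisfying the three-term recurrence. Write `p = 2h + 1`. Since
`2h - n ≡ -(n + 1) (mod p)`, the recurrence at the index `2h - n` is the recurrence at `n` read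
backwards. At the middle the coefficient `2h + 1` of `X Q h` vanishes, which gives
`Q (h + 1) = Q (h - 1)`, and induction outwards from `h` gives `Q (2h - m) = Q m`.
-/

theorem two_mul_sub_eq_of_legendre_recurrence {R : Type*} [CommRing R] [NoZeroDivisors R]
    (h : ℕ) [CharP R (2 * h + 1)] (x : R) (Q : ℕ → R)
    (hQ : ∀ n, n + 2 ≤ 2 * h →
      (n + 2 : R) * Q (n + 2) = (2 * n + 3 : R) * x * Q (n + 1) - (n + 1 : R) * Q n)
    {m : ℕ} (hm : m ≤ h) : Q (2 * h - m) = Q m := by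
  have hchar : (2 * h + 1 : R) = 0 := by exact_mod_cast CharP.cast_eq_zero R (2 * h + 1)
  have hcancel : ∀ k : ℕ, k < 2 * h → ∀ {a b : R}, (k + 1 : R) * a = (k + 1) * b → a = b := by
    intro k hk a b hab
    refine mul_left_cancel₀ ?_ hab
    exact_mod_cast (CharP.cast_eq_zero_iff R (2 * h + 1) (k + 1)).not.mpr
      (Nat.not_dvd_of_pos_of_lt k.succ_pos (by omega))
  suffices key : ∀ d j, j + d = h → Q (h + d) = Q j by
    rw [← key (h - m) m (by omega)]
    congr 1
    omega
  intro d
  induction d using Nat.twoStepInduction with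
  | zero => rintro j rfl; rfl
  | one =>
    intro j hj
    have hrec := hQ j (by omega)
    rw [← hj] at hchar ⊢
    push_cast at hchar
    refine hcancel j (by omega) ?_
    linear_combination -hrec + (Q (j + 2) - x * Q (j + 1)) * hchar
  | more d ih₀ ih₁ =>
    intro j hj
    have hrec₁ := hQ j (by omega)
    have hrec₂ := hQ (h + d) (by omega)
    rw [add_assoc, add_assoc, ih₁ (j + 1) (by omega), ih₀ (j + 2) (by omega)] at hrec₂
    rw [← add_assoc]
    rw [← hj] at hchar hrec₂ ⊢
    push_cast at hchar hrec₂ ⊢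
    -- modulo `2h + 1`, `hrec₂` is `hrec₁` with `Q j` replaced by `Q (h + d + 2)`
    refine hcancel j (by omega) ?_
    linear_combination -(hrec₁ + hrec₂) +
      (Q (j + (d + 2) + d + 2) + Q (j + 2) - 2 * x * Q (j + 1)) * hchar

theorem legendreP_add_two_recurrence (n : ℕ) :
    (n + 2 : ℚ[X]) * legendreP (n + 2) =
      (2 * n + 3 : ℚ[X]) * X * legendreP (n + 1) - (n + 1 : ℚ[X]) * legendreP n := by
  have hC : (n + 2 : ℚ[X]) = C ((n : ℚ) + 2) := by simp [C_ofNat]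
  rw [legendreP, hC, ← mul_assoc, ← C_mul, mul_inv_cancel₀ (by positivity), C_1, one_mul]
  simp [C_ofNat]

section pIntegral

variable (p : ℕ) [hp : Fact p.Prime]

def pIntSubring : Subring ℚ where
  carrier := {r | pInt p r}
  zero_mem' := by simp [pInt, hp.out.ne_one]
  one_mem' := by simp [pInt, hp.out.ne_one]
  add_mem' {r s} hr hs h := (hp.out.dvd_mul.mp (h.trans (Rat.add_den_dvd r s))).elim hr hs
  mul_mem' {r s} hr hs h := (hp.out.dvd_mul.mp (h.trans (Rat.mul_den_dvd r s))).elim hr hs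
  neg_mem' {r} hr := by simpa [pInt] using hr

variable {p}

theorem mem_pIntSubring {r : ℚ} : r ∈ pIntSubring p ↔ pInt p r := Iff.rfl

theorem inv_natCast_mem_pIntSubring {n : ℕ} (hn₀ : 0 < n) (hn : n < p) :
    (n : ℚ)⁻¹ ∈ pIntSubring p := by
  rw [mem_pIntSubring, pInt, Rat.inv_natCast_den_of_pos hn₀]
  exact Nat.not_dvd_of_pos_of_lt hn₀ hn

theorem cast_den_ne_zero (r : pIntSubring p) : ((r : ℚ).den : ZMod p) ≠ 0 := by
  rw [Ne, ZMod.natCast_eq_zero_iff]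
  exact r.2

variable (p)

noncomputable def pIntSubring.toZMod : pIntSubring p →+* ZMod p where
  toFun r := ((r : ℚ) : ZMod p)
  map_one' := Rat.cast_one
  map_mul' r s := Rat.cast_mul_of_ne_zero (cast_den_ne_zero r) (cast_den_ne_zero s)
  map_zero' := Rat.cast_zero
  map_add' r s := Rat.cast_add_of_ne_zero (cast_den_ne_zero r) (cast_den_ne_zero s)

variable {p}

theorem exists_pInt_eq_mul_of_toZMod_eq_zero {u : pIntSubring p}
    (hu : pIntSubring.toZMod p u = 0) : ∃ c, pInt p c ∧ (u : ℚ) = p * c := by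
  obtain ⟨a, ha⟩ : (p : ℤ) ∣ (u : ℚ).num := by
    rw [← ZMod.intCast_zmod_eq_zero_iff_dvd]
    change ((u : ℚ) : ZMod p) = 0 at hu
    rw [Rat.cast_def, div_eq_zero_iff] at hu
    exact hu.resolve_right (cast_den_ne_zero u)
  refine ⟨a / (u : ℚ).den, fun hdvd => u.2 (hdvd.trans ?_), ?_⟩
  · exact_mod_cast Rat.divInt_eq_div a (u : ℚ).den ▸ Rat.den_dvd a (u : ℚ).den
  · rw [← mul_div_assoc]
    exact_mod_cast (ha ▸ Rat.num_div_den (u : ℚ)).symm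

theorem pCong_of_toZMod_eq {r s : pIntSubring p}
    (h : pIntSubring.toZMod p r = pIntSubring.toZMod p s) : pCong p r s :=
  exists_pInt_eq_mul_of_toZMod_eq_zero (u := r - s) (by rw [map_sub, h, sub_self])

theorem legendreP_mem_lifts {n : ℕ} (hn : n < p) :
    legendreP n ∈ lifts (pIntSubring p).subtype := by
  induction n using Nat.strong_induction_on with
  | _ n ih =>
    match n with
    | 0 => exact one_mem _
    | 1 => exact X_mem_lifts _
    | n + 2 =>
      have h₀ := (lifts_iff_liftsRing _ _).mp (ih n (by omega) (by omega))
      have h₁ := (lifts_iff_liftsRing _ _).mp (ih (n + 1) (by omega) (by omega))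
      have hinv : C ((n + 2 : ℚ))⁻¹ ∈ liftsRing (pIntSubring p).subtype := by
        rw [← lifts_iff_liftsRing]
        refine C'_mem_lifts ⟨⟨_, inv_natCast_mem_pIntSubring (n := n + 2) (by omega) hn⟩, ?_⟩
        simp
      have hnat (k : ℕ) : C (k : ℚ) ∈ liftsRing (pIntSubring p).subtype := by
        rw [map_natCast]
        exact natCast_mem _ k
      rw [lifts_iff_liftsRing, legendreP]
      refine mul_mem hinv (sub_mem (mul_mem (mul_mem ?_ ?_) h₁) (mul_mem ?_ h₀))
      · exact_mod_cast hnat (2 * n + 3)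
      · exact (lifts_iff_liftsRing _ _).mp (X_mem_lifts _)
      · exact_mod_cast hnat (n + 1)

variable (p)

-- Only meaningful on `lifts (pIntSubring p).subtype`; elsewhere `invFun` picks an arbitrary lift.
noncomputable def reduceModP (f : ℚ[X]) : (ZMod p)[X] :=
  (Function.invFun (map (pIntSubring p).subtype) f).map (pIntSubring.toZMod p)

variable {p}

theorem reduceModP_map (g : (pIntSubring p)[X]) :
    reduceModP p (g.map (pIntSubring p).subtype) = g.map (pIntSubring.toZMod p) := by
  rw [reduceModP, Function.leftInverse_invFun (map_injective _ Subtype.val_injective) g]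

theorem reduceModP_legendreP_recurrence {n : ℕ} (hn : n + 2 < p) :
    (n + 2 : (ZMod p)[X]) * reduceModP p (legendreP (n + 2)) =
      (2 * n + 3 : (ZMod p)[X]) * X * reduceModP p (legendreP (n + 1)) -
        (n + 1 : (ZMod p)[X]) * reduceModP p (legendreP n) := by
  obtain ⟨g₀, hg₀⟩ := (mem_lifts _).mp (legendreP_mem_lifts (p := p) (n := n) (by omega))
  obtain ⟨g₁, hg₁⟩ := (mem_lifts _).mp (legendreP_mem_lifts (p := p) (n := n + 1) (by omega))
  obtain ⟨g₂, hg₂⟩ := (mem_lifts _).mp (legendreP_mem_lifts (p := p) (n := n + 2) hn)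
  have hg : (n + 2 : (pIntSubring p)[X]) * g₂ =
      (2 * n + 3 : (pIntSubring p)[X]) * X * g₁ - (n + 1 : (pIntSubring p)[X]) * g₀ := by
    apply map_injective _ (pIntSubring p).subtype_injective
    simp only [Polynomial.map_mul, Polynomial.map_sub, Polynomial.map_add, Polynomial.map_natCast,
      Polynomial.map_ofNat, Polynomial.map_one, map_X, hg₀, hg₁, hg₂]
    exact legendreP_add_two_recurrence n
  rw [← hg₀, ← hg₁, ← hg₂, reduceModP_map, reduceModP_map, reduceModP_map]
  simpa only [Polynomial.map_mul, Polynomial.map_sub, Polynomial.map_add, Polynomial.map_natCast,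
      Polynomial.map_ofNat, Polynomial.map_one, map_X] using congrArg (map (pIntSubring.toZMod p)) hg

theorem pCong_coeff_of_reduceModP_eq {f g : ℚ[X]} (hf : f ∈ lifts (pIntSubring p).subtype)
    (hg : g ∈ lifts (pIntSubring p).subtype) (h : reduceModP p f = reduceModP p g) (k : ℕ) :
    pCong p (f.coeff k) (g.coeff k) := by
  obtain ⟨f, rfl⟩ := (mem_lifts _).mp hf
  obtain ⟨g, rfl⟩ := (mem_lifts _).mp hg
  rw [reduceModP_map, reduceModP_map] at h
  have hk : pIntSubring.toZMod p (f.coeff k) = pIntSubring.toZMod p (g.coeff k) := by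
    simpa only [coeff_map] using congrArg (coeff · k) h
  simpa only [coeff_map, Subring.coe_subtype] using pCong_of_toZMod_eq hk

end pIntegral

theorem legendre_sub_congr_general (p : ℕ) (hp : p.Prime) (hodd : Odd p) (m : ℕ)
    (hm2 : m ≤ (p - 1) / 2) (k : ℕ) :
    pCong p ((legendreP (p - 1 - m)).coeff k) ((legendreP m).coeff k) := by
  have := Fact.mk hp
  obtain ⟨h, rfl⟩ := hodd
  have hm : m ≤ h := by omega
  refine pCong_coeff_of_reduceModP_eq (legendreP_mem_lifts (by omega))
    (legendreP_mem_lifts (by omega)) ?_ k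
  rw [show 2 * h + 1 - 1 - m = 2 * h - m by omega]
  exact two_mul_sub_eq_of_legendre_recurrence h X (fun n => reduceModP (2 * h + 1) (legendreP n))
    (fun n hn => reduceModP_legendreP_recurrence (by omega)) hm

theorem legendre_sub_congr (p : ℕ) (hp : p.Prime) (hodd : Odd p) (m : ℕ)
    (hm1 : 1 ≤ m) (hm2 : m ≤ (p - 1) / 2) (k : ℕ) :
    pCong p ((legendreP (p - 1 - m)).coeff k) ((legendreP m).coeff k) :=
  legendre_sub_congr_general p hp hodd m hm2 k
end

section
/- Let p be an odd prime and let m be an integer with 0 \le m \le p-1. Then P_{p+m}(x) \equiv x^p P_m(x) (mod p), as polynomials with p-integral rational coefficients reduced modulo p. -/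
open Polynomial Finset

/-!
Rodrigues' formula `2ⁿ Pₙ = D⁽ⁿ⁾ (X² - 1)ⁿ`, with `D⁽ⁿ⁾` the `n`-th Hasse derivative,
exhibits `2ⁿ Pₙ` as an integer polynomial. It follows from the three-term recurrence,
which comes from applying Hasse derivatives to the differential equation
`(X² - 1) u' = 2n X u` satisfied by `u = (X² - 1)ⁿ`.

Modulo `p`, `(X² - 1)^(p+m) = (X^p X^p - 1) (X² - 1)^m`, and in characteristic `p`
`D⁽ᵏ⁾ (X^p f) = X^p D⁽ᵏ⁾ f + D⁽ᵏ⁻ᵖ⁾ f`. Since `(X² - 1)^m` has degree `2m < p + m`,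
this leaves `2^(p+m) P_(p+m) ≡ 2 X^p · 2^m P_m`; finally `2^p ≡ 2`, and `2` is
invertible modulo the odd prime `p`.
-/

namespace Polynomial

variable {R S : Type*} [CommRing R] [CommRing S]

lemma map_hasseDeriv (f : R →+* S) (k : ℕ) (g : R[X]) :
    (hasseDeriv k g).map f = hasseDeriv k (g.map f) := by
  ext i
  simp [hasseDeriv_coeff]

lemma hasseDeriv_succ_X_mul (n : ℕ) (f : R[X]) :
    hasseDeriv (n + 1) (X * f) = X * hasseDeriv (n + 1) f + hasseDeriv n f := by
  rw [hasseDeriv_mul, Finset.Nat.sum_antidiagonal_succ, Finset.sum_eq_single (0, n)]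
  · simp
  · rintro ⟨i, j⟩ hij hne
    have hi : i ≠ 0 := by rintro rfl; simp_all
    simp [hasseDeriv_X (k := i + 1) (by omega)]
  · simp

lemma hasseDeriv_derivative (n : ℕ) (f : R[X]) :
    hasseDeriv n (derivative f) = (n + 1) • hasseDeriv (n + 1) f := by
  have := congr($(hasseDeriv_comp (R := R) n 1) f)
  simpa [hasseDeriv_one', add_mul] using this

lemma hasseDeriv_X_pow_char {p : ℕ} [hp : Fact p.Prime] [CharP R p] (i : ℕ) :
    hasseDeriv i (X ^ p : R[X]) = if i = 0 then X ^ p else if i = p then 1 else 0 := by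
  rw [← monomial_one_right_eq_X_pow, hasseDeriv_monomial]
  rcases Nat.lt_trichotomy i p with hi | rfl | hi
  · rcases Nat.eq_zero_or_pos i with rfl | hi0
    · simp
    have : (p.choose i : R) = 0 :=
      (CharP.cast_eq_zero_iff R p _).2 (hp.out.dvd_choose_self hi0.ne' hi)
    simp [this, hi0.ne', hi.ne]
  · simp [hp.out.ne_zero]
  · simp [Nat.choose_eq_zero_of_lt hi, hi.ne', (hp.out.pos.trans hi).ne']

/-- Hasse derivatives extended by zero to negative orders, so that the Leibniz rules below hold
without case distinctions at small orders. -/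
noncomputable def hasseDerivZ : ℤ → R[X] →ₗ[R] R[X]
  | .ofNat n => hasseDeriv n
  | .negSucc _ => 0

lemma hasseDerivZ_natCast (n : ℕ) (f : R[X]) : hasseDerivZ n f = hasseDeriv n f := rfl

lemma hasseDerivZ_zero (f : R[X]) : hasseDerivZ 0 f = f := hasseDeriv_zero' f

lemma hasseDerivZ_of_neg {k : ℤ} (hk : k < 0) (f : R[X]) : hasseDerivZ k f = 0 := by
  obtain ⟨n, rfl⟩ := Int.exists_eq_neg_ofNat hk.le
  rcases n with _ | n
  · simp at hk
  · rfl

lemma hasseDerivZ_X_mul (k : ℤ) (f : R[X]) :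
    hasseDerivZ k (X * f) = X * hasseDerivZ k f + hasseDerivZ (k - 1) f := by
  rcases lt_or_ge k 0 with hk | hk
  · simp [hasseDerivZ_of_neg hk, hasseDerivZ_of_neg (show k - 1 < 0 by omega)]
  lift k to ℕ using hk
  rcases k with _ | n
  · simp [hasseDerivZ_zero, hasseDerivZ_of_neg (show (-1 : ℤ) < 0 by omega)]
  · rw [show ((n + 1 : ℕ) : ℤ) - 1 = n by push_cast; ring]
    simpa only [hasseDerivZ_natCast] using hasseDeriv_succ_X_mul n f

lemma hasseDerivZ_X_sq_sub_one_mul (k : ℤ) (f : R[X]) :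
    hasseDerivZ k ((X ^ 2 - 1) * f) =
      (X ^ 2 - 1) * hasseDerivZ k f + 2 * X * hasseDerivZ (k - 1) f + hasseDerivZ (k - 2) f := by
  rw [sub_mul, one_mul, map_sub, sq, mul_assoc, hasseDerivZ_X_mul, hasseDerivZ_X_mul,
    hasseDerivZ_X_mul, show k - 1 - 1 = k - 2 by ring]
  ring

lemma hasseDerivZ_derivative (k : ℤ) (f : R[X]) :
    hasseDerivZ k (derivative f) = (k + 1) • hasseDerivZ (k + 1) f := by
  rcases lt_or_ge k 0 with hk | hk
  · rcases lt_or_eq_of_le (show k + 1 ≤ 0 by omega) with hk' | hk'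
    · simp [hasseDerivZ_of_neg hk, hasseDerivZ_of_neg hk']
    · simp [hasseDerivZ_of_neg hk, hk']
  lift k to ℕ using hk
  rw [show (k : ℤ) + 1 = ((k + 1 : ℕ) : ℤ) by push_cast; ring, hasseDerivZ_natCast,
    hasseDerivZ_natCast, hasseDeriv_derivative, natCast_zsmul]

lemma hasseDerivZ_X_pow_char_mul {p : ℕ} [hp : Fact p.Prime] [CharP R p] (k : ℤ) (f : R[X]) :
    hasseDerivZ k (X ^ p * f) = X ^ p * hasseDerivZ k f + hasseDerivZ (k - p) f := by
  rcases lt_or_ge k 0 with hk | hk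
  · simp [hasseDerivZ_of_neg hk, hasseDerivZ_of_neg (show k - p < 0 by omega)]
  lift k to ℕ using hk
  simp only [hasseDerivZ_natCast, hasseDeriv_mul, hasseDeriv_X_pow_char, ite_mul, one_mul,
    zero_mul]
  rcases lt_or_ge k p with hkp | hkp
  · rw [hasseDerivZ_of_neg (by omega), add_zero, Finset.sum_eq_single (0, k)]
    · simp
    · rintro ⟨i, j⟩ hij hne
      have : i ≠ 0 := by rintro rfl; simp_all
      simp_all [show i ≠ p by simp at hij; omega]
    · simp
  · obtain ⟨m, rfl⟩ := Nat.exists_eq_add_of_le' hkp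
    rw [show ((m + p : ℕ) : ℤ) - p = m by push_cast; ring, hasseDerivZ_natCast,
      Finset.sum_eq_add (0, m + p) (p, m) (by simp [hp.out.ne_zero])]
    · simp [hp.out.ne_zero]
    · rintro ⟨i, j⟩ hij ⟨h0, hp'⟩
      have : i ≠ 0 := by rintro rfl; simp_all
      have : i ≠ p := by rintro rfl; simp at hij hp'; omega
      simp [*]
    · simp
    · simp [add_comm]

lemma hasseDerivZ_X_sq_sub_one_sq_mul (k : ℤ) (f : R[X]) :
    hasseDerivZ k ((X ^ 2 - 1) ^ 2 * f) = (X ^ 2 - 1) ^ 2 * hasseDerivZ k f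
      + 4 * X * (X ^ 2 - 1) * hasseDerivZ (k - 1) f + (6 * X ^ 2 - 2) * hasseDerivZ (k - 2) f
      + 4 * X * hasseDerivZ (k - 3) f + hasseDerivZ (k - 4) f := by
  rw [sq (X ^ 2 - 1 : R[X]), mul_assoc, hasseDerivZ_X_sq_sub_one_mul,
    hasseDerivZ_X_sq_sub_one_mul, hasseDerivZ_X_sq_sub_one_mul, hasseDerivZ_X_sq_sub_one_mul]
  ring_nf

lemma hasseDerivZ_of_X_sq_sub_one_mul_derivative {u : R[X]} {c : R}
    (hu : (X ^ 2 - 1) * derivative u = C c * X * u) (k : ℤ) :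
    ((k : R[X]) + 1) * (X ^ 2 - 1) * hasseDerivZ (k + 1) u
      + 2 * (k : R[X]) * X * hasseDerivZ k u + ((k : R[X]) - 1) * hasseDerivZ (k - 1) u
      = C c * (X * hasseDerivZ k u + hasseDerivZ (k - 1) u) := by
  have h := congr(hasseDerivZ k $hu)
  rw [hasseDerivZ_X_sq_sub_one_mul, hasseDerivZ_derivative, hasseDerivZ_derivative,
    hasseDerivZ_derivative, mul_assoc (C c), ← smul_eq_C_mul, map_smul, hasseDerivZ_X_mul,
    sub_add_cancel, show k - 2 + 1 = k - 1 by ring, zsmul_eq_mul, zsmul_eq_mul, zsmul_eq_mul,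
    smul_eq_C_mul] at h
  push_cast at h
  linear_combination h

end Polynomial

section Rodrigues

variable {R S : Type*} [CommRing R] [CommRing S]

variable (R) in
/-- Rodrigues' formula for `2ⁿ Pₙ`: the Hasse derivative `D⁽ⁿ⁾ = Dⁿ / n!` absorbs the `n!` of the
classical formula, so this polynomial is defined over any commutative ring. -/
noncomputable def rodrigues (n : ℕ) : R[X] := hasseDeriv n ((X ^ 2 - 1) ^ n)

lemma X_sq_sub_one_mul_derivative_pow (n : ℕ) :
    (X ^ 2 - 1 : R[X]) * derivative ((X ^ 2 - 1) ^ n) = C (2 * n : R) * X * (X ^ 2 - 1) ^ n := by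
  rcases n with _ | n
  · simp
  · rw [derivative_pow_succ]
    simp only [derivative_sub, derivative_X_pow, derivative_one, map_mul, map_add, map_natCast,
      C_ofNat, map_one]
    push_cast
    ring

lemma rodrigues_recurrence (n : ℕ) :
    (n + 2 : R[X]) * rodrigues R (n + 2)
      = 2 * (2 * (n : R[X]) + 3) * X * rodrigues R (n + 1)
        - 4 * ((n : R[X]) + 1) * rodrigues R n := by
  obtain ⟨u, hu⟩ : ∃ u, (X ^ 2 - 1 : R[X]) ^ n = u := ⟨_, rfl⟩
  have e0 : rodrigues R n = hasseDerivZ n u := by rw [← hu]; rfl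
  have e1 : rodrigues R (n + 1) = (X ^ 2 - 1) * hasseDerivZ (n + 1) u
      + 2 * X * hasseDerivZ n u + hasseDerivZ (n - 1) u := by
    rw [rodrigues, pow_succ', hu, ← hasseDerivZ_natCast, Nat.cast_succ,
      hasseDerivZ_X_sq_sub_one_mul, add_sub_cancel_right, show (n : ℤ) + 1 - 2 = n - 1 by ring]
  have e2 : rodrigues R (n + 2) = (X ^ 2 - 1) ^ 2 * hasseDerivZ (n + 2) u
      + 4 * X * (X ^ 2 - 1) * hasseDerivZ (n + 1) u + (6 * X ^ 2 - 2) * hasseDerivZ n u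
      + 4 * X * hasseDerivZ (n - 1) u + hasseDerivZ (n - 2) u := by
    rw [rodrigues, pow_add, mul_comm, hu, ← hasseDerivZ_natCast, Nat.cast_add, Nat.cast_two,
      hasseDerivZ_X_sq_sub_one_sq_mul]
    ring_nf
  have hode := X_sq_sub_one_mul_derivative_pow (R := R) n
  rw [hu] at hode
  have hpred := hasseDerivZ_of_X_sq_sub_one_mul_derivative hode (n - 1)
  have hsucc := hasseDerivZ_of_X_sq_sub_one_mul_derivative hode (n + 1)
  simp only [sub_add_cancel, add_sub_cancel_right, show (n : ℤ) - 1 - 1 = n - 2 by ring,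
    show (n : ℤ) + 1 + 1 = n + 2 by ring, map_mul, map_natCast, C_ofNat] at hpred hsucc
  push_cast at hpred hsucc
  rw [e0, e1, e2]
  linear_combination (X ^ 2 - 1) * hsucc - hpred

lemma rodrigues_map (f : R →+* S) (n : ℕ) : (rodrigues R n).map f = rodrigues S n := by
  simp [rodrigues, map_hasseDeriv]

lemma rodrigues_zero : rodrigues R 0 = 1 := by
  simp [rodrigues]

lemma rodrigues_one : rodrigues R 1 = 2 * X := by
  simp [rodrigues, one_add_one_eq_two, C_ofNat]

lemma rodrigues_eq_C_mul_legendreP : ∀ n : ℕ, rodrigues ℚ n = C (2 ^ n) * legendreP n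
  | 0 => by simp [rodrigues_zero, legendreP]
  | 1 => by simp [rodrigues_one, legendreP, C_ofNat]
  | n + 2 => by
    have hn : (n + 2 : ℚ[X]) ≠ 0 := by exact_mod_cast (n + 1).succ_ne_zero
    apply mul_left_cancel₀ hn
    rw [rodrigues_recurrence, rodrigues_eq_C_mul_legendreP (n + 1),
      rodrigues_eq_C_mul_legendreP n, legendreP]
    have hinv : (n + 2 : ℚ[X]) * C ((n + 2 : ℚ))⁻¹ = 1 := by
      rw [show (n + 2 : ℚ[X]) = C (n + 2 : ℚ) by simp [C_ofNat], ← C_mul,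
        mul_inv_cancel₀ (by positivity), C_1]
    simp only [map_pow, map_add, map_mul, map_natCast, C_ofNat, map_one]
    linear_combination (-2 ^ (n + 2) * ((2 * n + 3) * X * legendreP (n + 1)
      - (n + 1) * legendreP n)) * hinv

lemma rodrigues_add_char {p : ℕ} [Fact p.Prime] [CharP R p] {m : ℕ} (hm : m < p) :
    rodrigues R (p + m) = 2 * X ^ p * rodrigues R m := by
  have hdeg : ((X ^ 2 - 1 : R[X]) ^ m).natDegree < p + m :=
    (natDegree_pow_le_of_le m (show (X ^ 2 - 1 : R[X]).natDegree ≤ 2 by compute_degree)).trans_lt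
      (by omega)
  have hfrob : (X ^ 2 - 1 : R[X]) ^ p = X ^ p * X ^ p - 1 := by
    rw [sub_pow_char, one_pow, ← pow_mul, two_mul, pow_add]
  rw [rodrigues, rodrigues, pow_add, hfrob, sub_mul, one_mul, mul_assoc, ← hasseDerivZ_natCast,
    ← hasseDerivZ_natCast, map_sub, hasseDerivZ_X_pow_char_mul, hasseDerivZ_X_pow_char_mul,
    hasseDerivZ_X_pow_char_mul, show ((p + m : ℕ) : ℤ) - p = m by push_cast; ring,
    hasseDerivZ_of_neg (show (m : ℤ) - p < 0 by omega), hasseDerivZ_natCast (p + m),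
    hasseDeriv_eq_zero_of_lt_natDegree _ _ hdeg]
  ring

end Rodrigues

lemma pInt_intCast_div {p : ℕ} {t d : ℤ} (hd : ¬ (p : ℤ) ∣ d) : pInt p (t / d) := by
  intro hp
  rw [← Rat.divInt_eq_div] at hp
  exact hd ((Int.natCast_dvd_natCast.mpr hp).trans (Rat.den_dvd t d))

lemma pCong_coeff_of_map_eq {p : ℕ} {A B : ℤ[X]} {P Q : ℚ[X]} {d : ℤ} (hd : ¬ (p : ℤ) ∣ d)
    (hA : A.map (Int.castRingHom ℚ) = C (d : ℚ) * P)
    (hB : B.map (Int.castRingHom ℚ) = C (d : ℚ) * Q)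
    (hAB : A.map (Int.castRingHom (ZMod p)) = B.map (Int.castRingHom (ZMod p))) (k : ℕ) :
    pCong p (P.coeff k) (Q.coeff k) := by
  obtain ⟨t, ht⟩ : (p : ℤ) ∣ A.coeff k - B.coeff k := by
    rw [← ZMod.intCast_zmod_eq_zero_iff_dvd, Int.cast_sub, sub_eq_zero]
    simpa using congr(($hAB).coeff k)
  have hd0 : (d : ℚ) ≠ 0 := Int.cast_ne_zero.mpr (by rintro rfl; exact hd (dvd_zero _))
  have hPA : (d : ℚ) * P.coeff k = A.coeff k := by simpa using congr(($hA).coeff k).symm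
  have hQB : (d : ℚ) * Q.coeff k = B.coeff k := by simpa using congr(($hB).coeff k).symm
  refine ⟨t / d, pInt_intCast_div hd, ?_⟩
  have ht' : (A.coeff k : ℚ) - B.coeff k = p * t := by exact_mod_cast ht
  field_simp
  linear_combination hPA - hQB + ht'

theorem legendre_add_p_congr (p : ℕ) (hp : p.Prime) (hodd : Odd p) (m : ℕ)
    (hm : m ≤ p - 1) (k : ℕ) :
    pCong p ((legendreP (p + m)).coeff k) ((X ^ p * legendreP m).coeff k) := by
  have : Fact p.Prime := ⟨hp⟩
  have hd : ¬ (p : ℤ) ∣ 2 ^ (p + m) := by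
    intro h
    have h2 : p ≤ 2 := Nat.le_of_dvd two_pos (hp.dvd_of_dvd_pow (by exact_mod_cast h))
    obtain ⟨r, hr⟩ := hodd
    have := hp.two_le
    omega
  refine pCong_coeff_of_map_eq (A := rodrigues ℤ (p + m))
    (B := 2 ^ p * X ^ p * rodrigues ℤ m) hd ?_ ?_ ?_ k
  · rw [rodrigues_map, rodrigues_eq_C_mul_legendreP]
    simp
  · simp [rodrigues_map, rodrigues_eq_C_mul_legendreP, pow_add, C_ofNat]
    ring
  · have hmp : m < p := by have := hp.two_le; omega
    rw [rodrigues_map, rodrigues_add_char hmp, Polynomial.map_mul, Polynomial.map_mul,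
      rodrigues_map, Polynomial.map_pow, Polynomial.map_pow, Polynomial.map_X,
      Polynomial.map_ofNat, ← C_ofNat, ← C_pow, ZMod.pow_card]
end

section
/- Let p be an odd prime and let a, t be p-integral rational numbers with t not congruent to 0 mod p. Let \langle a \rangle_p \in {0,1,...,p-1} be the residue of a modulo p. Then \sum_{k=0}^{p-1} \binom{a}{k} \binom{-1/2 - a}{k} (1-t)^k \equiv t^{\langle a \rangle_p} \sum_{k=0}^{p-1} \binom{a}{k} \binom{a - 1/2}{k} (1 - 1/t)^k (mod p). -/
/-!
Lift `a`, `t` and `1/2` to `ℤ_[p]`, where `t` becomes a unit. For `k < p` the factorial `k!` is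
invertible mod `p`, so the residue of `C(x, k) = x(x-1)⋯(x-k+1)/k!` depends only on the residue of
`x`; hence `a` may be replaced by `n` on both sides. For the natural number `n` the sums terminate
at `k = n`, and the two sides become equal on the nose by Pfaff's transformation
`∑ C(n,k) C(b,k) (1-t)^k = t^n ∑ C(n,k) C(-1-b,k) (1-1/t)^k` with `b = -1/2 - n`. That identity
follows by expanding both sides in powers of `t` and applying Chu–Vandermonde.
-/

open Finset

theorem Nat.choose_mul_choose_eq_choose_mul_choose_sub {n i m : ℕ} (hi : i ≤ n) :
    n.choose i * i.choose m = n.choose m * (n - m).choose (n - i) := by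
  rcases lt_or_ge i m with him | hmi
  · rcases le_or_gt m n with hmn | hnm
    · rw [Nat.choose_eq_zero_of_lt him, Nat.choose_eq_zero_of_lt (by omega : n - m < n - i),
        mul_zero, mul_zero]
    · rw [Nat.choose_eq_zero_of_lt him, Nat.choose_eq_zero_of_lt hnm, mul_zero, zero_mul]
  · rw [Nat.choose_mul hmi, ← Nat.choose_symm (by omega : i - m ≤ n - m)]
    congr 2
    omega

namespace Ring

variable {R : Type*} [CommRing R] [BinomialRing R]

open Polynomial in
theorem factorial_mul_choose_eq_prod_range (r : R) (k : ℕ) :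
    (k.factorial : R) * choose r k = ∏ i ∈ range k, (r - i) := by
  rw [← nsmul_eq_mul, ← descPochhammer_eq_factorial_smul_choose, ← aeval_eq_smeval, aeval_def,
    ← eval_map, descPochhammer_map, descPochhammer_eval_eq_prod_range]

theorem map_choose_eq_of_map_eq {K : Type*} [CommRing K] [IsDomain K] (f : R →+* K) {x y : R}
    (hxy : f x = f y) {k : ℕ} (hk : (k.factorial : K) ≠ 0) :
    f (choose x k) = f (choose y k) := by
  refine mul_left_cancel₀ hk ?_
  simp only [← map_natCast f, ← map_mul, factorial_mul_choose_eq_prod_range, map_prod, map_sub,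
    hxy]

theorem choose_natCast_sub_one_sub (x : R) (n : ℕ) :
    choose ((n : R) - 1 - x) n = (-1) ^ n * choose x n := by
  rw [show (n : R) - 1 - x = -(x + 1 - n) by ring, choose_neg, Units.smul_def, zsmul_eq_mul,
    Int.cast_negOnePow_natCast, sub_add_cancel, add_sub_cancel_right]

theorem sum_choose_mul_choose_mul_one_sub_pow (n : ℕ) (b s : R) :
    ∑ k ∈ range (n + 1), (n.choose k : R) * choose b k * (1 - s) ^ k
      = ∑ m ∈ range (n + 1), (n.choose m : R) * choose (b + (n - m : ℕ)) n * (-s) ^ m := by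
  have binomial (k : ℕ) (hk : k ≤ n) :
      (1 - s) ^ k = ∑ m ∈ range (n + 1), (k.choose m : R) * (-s) ^ m := by
    rw [show 1 - s = -s + 1 by ring, add_pow]
    refine (sum_subset (range_subset_range.mpr (Nat.succ_le_succ hk)) fun m _ hm => ?_).trans ?_
    · simp [Nat.choose_eq_zero_of_lt (by simpa using hm : k < m)]
    · exact sum_congr rfl fun m _ => by ring
  have vandermonde (m : ℕ) : choose (b + (n - m : ℕ)) n
      = ∑ k ∈ range (n + 1), choose b k * ((n - m).choose (n - k) : R) := by
    rw [add_choose_eq _ (Commute.all _ _), Nat.sum_antidiagonal_eq_sum_range_succ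
      (fun i j => choose b i * choose ((n - m : ℕ) : R) j)]
    simp only [choose_natCast]
  calc ∑ k ∈ range (n + 1), (n.choose k : R) * choose b k * (1 - s) ^ k
      = ∑ k ∈ range (n + 1), ∑ m ∈ range (n + 1),
          (n.choose k * k.choose m : ℕ) * choose b k * (-s) ^ m := by
        refine sum_congr rfl fun k hk => ?_
        rw [binomial k (by simpa [Nat.lt_succ_iff] using hk), mul_sum]
        exact sum_congr rfl fun m _ => by push_cast; ring
    _ = ∑ m ∈ range (n + 1), ∑ k ∈ range (n + 1),
          (n.choose m * (n - m).choose (n - k) : ℕ) * choose b k * (-s) ^ m := by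
        rw [sum_comm]
        refine sum_congr rfl fun m _ => sum_congr rfl fun k hk => ?_
        rw [Nat.choose_mul_choose_eq_choose_mul_choose_sub (by simpa [Nat.lt_succ_iff] using hk)]
    _ = _ := by
        refine sum_congr rfl fun m _ => ?_
        rw [vandermonde, mul_sum, sum_mul]
        exact sum_congr rfl fun k _ => by push_cast; ring

theorem pfaff_transformation (n : ℕ) (b : R) (u : Rˣ) :
    ∑ k ∈ range (n + 1), (n.choose k : R) * choose b k * (1 - u) ^ k
      = u ^ n * ∑ k ∈ range (n + 1), (n.choose k : R) * choose (-1 - b) k * (1 - ↑u⁻¹) ^ k := by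
  rw [sum_choose_mul_choose_mul_one_sub_pow, sum_choose_mul_choose_mul_one_sub_pow, mul_sum,
    ← sum_range_reflect]
  refine sum_congr rfl fun m hm => ?_
  obtain ⟨j, rfl⟩ := Nat.exists_eq_add_of_le (Nat.lt_succ_iff.mp (mem_range.mp hm))
  have hb : -1 - b + (j : ℕ) = (m + j : ℕ) - 1 - (b + m) := by push_cast; ring
  have hu : (u : R) ^ (m + j) * (-(u⁻¹ : Rˣ) : R) ^ m * (-1) ^ (m + j) = (-u) ^ j := by
    have hsign : (-1 : R) ^ m * (-1) ^ m = 1 := by rw [← mul_pow]; simp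
    have hunit : (u : R) ^ m * (↑u⁻¹ : R) ^ m = 1 := by rw [← mul_pow]; simp
    linear_combination ((-1) ^ j * (u : R) ^ j * (u : R) ^ m * (↑u⁻¹ : R) ^ m) * hsign
      + ((-1) ^ j * (u : R) ^ j) * hunit
  simp only [add_tsub_cancel_right, add_tsub_cancel_left]
  rw [Nat.choose_symm_add, hb, choose_natCast_sub_one_sub, ← hu]
  ring

end Ring

open Ring

theorem gchoose_eq_choose (a : ℚ) (k : ℕ) : gchoose a k = choose a k := by
  rw [gchoose, ← factorial_mul_choose_eq_prod_range,
    mul_div_cancel_left₀ _ (by exact_mod_cast k.factorial_ne_zero)]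

section BinomSum

variable {R : Type*} [CommRing R] [BinomialRing R]

noncomputable def binomSum (N : ℕ) (b c x : R) : R :=
  ∑ k ∈ range N, choose b k * choose c k * x ^ k

theorem binomSum_natCast_of_lt {n N : ℕ} (hn : n < N) (c x : R) :
    binomSum N (n : R) c x = ∑ k ∈ range (n + 1), (n.choose k : R) * choose c k * x ^ k := by
  refine (sum_subset (range_subset_range.mpr hn) fun k _ hk => ?_).symm.trans ?_
  · rw [choose_natCast, Nat.choose_eq_zero_of_lt (by simpa using hk)]
    simp
  · simp only [choose_natCast]

theorem binomSum_pfaff {n N : ℕ} (hn : n < N) (b : R) (u : Rˣ) :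
    binomSum N (n : R) b (1 - u) = u ^ n * binomSum N (n : R) (-1 - b) (1 - ↑u⁻¹) := by
  rw [binomSum_natCast_of_lt hn, binomSum_natCast_of_lt hn, pfaff_transformation]

theorem map_binomSum {S : Type*} [CommRing S] [BinomialRing S] (f : R →+* S) (N : ℕ)
    (b c x : R) : f (binomSum N b c x) = binomSum N (f b) (f c) (f x) := by
  simp only [binomSum, map_sum, map_mul, map_pow, map_choose]

theorem map_binomSum_eq_of_map_eq {K : Type*} [CommRing K] [IsDomain K] (f : R →+* K) {N : ℕ}
    (hN : ∀ k < N, (k.factorial : K) ≠ 0) {b b' c c' : R} (hb : f b = f b') (hc : f c = f c')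
    (x : R) : f (binomSum N b c x) = f (binomSum N b' c' x) := by
  simp only [binomSum, map_sum, map_mul, map_pow]
  refine sum_congr rfl fun k hk => ?_
  have hk := hN k (mem_range.mp hk)
  rw [map_choose_eq_of_map_eq f hb hk, map_choose_eq_of_map_eq f hc hk]

@[simp, norm_cast]
theorem PadicInt.coe_binomSum {p : ℕ} [Fact p.Prime] (N : ℕ) (b c x : ℤ_[p]) :
    ((binomSum N b c x : ℤ_[p]) : ℚ_[p]) = binomSum N (b : ℚ_[p]) c x :=
  map_binomSum PadicInt.Coe.ringHom N b c x

@[simp, norm_cast]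
theorem Rat.cast_binomSum {K : Type*} [Field K] [CharZero K] (N : ℕ) (b c x : ℚ) :
    ((binomSum N b c x : ℚ) : K) = binomSum N (b : K) c x :=
  map_binomSum (Rat.castHom K) N b c x

end BinomSum

section PIntegral

variable {p : ℕ} [Fact p.Prime]

theorem pInt_iff_norm_le_one {r : ℚ} : pInt p r ↔ ‖(r : ℚ_[p])‖ ≤ 1 := by
  rw [Padic.norm_rat_le_one_iff_padicValuation_le_one, Rat.padicValuation_le_one_iff, pInt]

theorem exists_padicInt_coe_eq_of_pInt {r : ℚ} (hr : pInt p r) : ∃ x : ℤ_[p], (x : ℚ_[p]) = r :=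
  ⟨⟨r, pInt_iff_norm_le_one.mp hr⟩, rfl⟩

theorem pInt_one_div_two (hodd : Odd p) : pInt p (1 / 2) := by
  intro h
  have hp2 : p = 2 := (Nat.prime_dvd_prime_iff_eq Fact.out Nat.prime_two).mp (by simpa using h)
  exact Nat.not_even_iff_odd.mpr hodd (hp2 ▸ even_two)

theorem pCong_iff_norm_sub_lt_one {r s : ℚ} : pCong p r s ↔ ‖(r : ℚ_[p]) - s‖ < 1 := by
  have hp : (1 : ℝ) < p := by exact_mod_cast (Fact.out : p.Prime).one_lt
  constructor
  · rintro ⟨c, hc, hrs⟩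
    rw [← Rat.cast_sub, hrs, Rat.cast_mul, norm_mul, Rat.cast_natCast, Padic.norm_p]
    calc (p : ℝ)⁻¹ * ‖(c : ℚ_[p])‖ ≤ (p : ℝ)⁻¹ * 1 := by gcongr; exact pInt_iff_norm_le_one.mp hc
      _ < 1 := by rw [mul_one]; exact inv_lt_one_of_one_lt₀ hp
  · intro h
    refine ⟨(r - s) / p, pInt_iff_norm_le_one.mpr ?_, ?_⟩
    · have := (Padic.norm_le_pow_iff_norm_lt_pow_add_one _ (-1)).mpr (by simpa using h)
      push_cast
      rw [norm_div, Padic.norm_p, div_le_one (by positivity)]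
      simpa using this
    · field_simp [(Fact.out : p.Prime).ne_zero]

theorem PadicInt.toZMod_eq_toZMod_iff {x y : ℤ_[p]} :
    PadicInt.toZMod x = PadicInt.toZMod y ↔ ‖x - y‖ < 1 := by
  rw [← sub_eq_zero, ← map_sub, ← RingHom.mem_ker, PadicInt.ker_toZMod,
    IsLocalRing.mem_maximalIdeal, PadicInt.mem_nonunits]

theorem PadicInt.isUnit_of_toZMod_ne_zero {x : ℤ_[p]} (hx : PadicInt.toZMod x ≠ 0) : IsUnit x := by
  rw [← IsLocalRing.notMem_maximalIdeal, ← PadicInt.ker_toZMod]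
  exact hx

theorem ZMod.natCast_factorial_ne_zero {k : ℕ} (hk : k < p) : (k.factorial : ZMod p) ≠ 0 := by
  rw [Ne, ZMod.natCast_eq_zero_iff, (Fact.out : p.Prime).dvd_factorial]
  omega

theorem pCong_iff_toZMod_eq {r s : ℚ} {x y : ℤ_[p]} (hx : (x : ℚ_[p]) = r)
    (hy : (y : ℚ_[p]) = s) : pCong p r s ↔ PadicInt.toZMod x = PadicInt.toZMod y := by
  rw [pCong_iff_norm_sub_lt_one, PadicInt.toZMod_eq_toZMod_iff, PadicInt.norm_def,
    PadicInt.coe_sub, hx, hy]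

theorem PadicInt.toZMod_binomSum_pfaff {n : ℕ} (hn : n < p) {α h : ℤ_[p]}
    (hα : PadicInt.toZMod α = PadicInt.toZMod (n : ℤ_[p])) (h2 : 2 * h = 1) (u : ℤ_[p]ˣ) :
    PadicInt.toZMod (binomSum p α (-h - α) (1 - u))
      = PadicInt.toZMod ((u : ℤ_[p]) ^ n * binomSum p α (α - h) (1 - ↑u⁻¹)) :=
  have hfact : ∀ k < p, (k.factorial : ZMod p) ≠ 0 := fun _ => ZMod.natCast_factorial_ne_zero
  calc _ = PadicInt.toZMod (binomSum p (n : ℤ_[p]) (-h - n) (1 - u)) :=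
        map_binomSum_eq_of_map_eq _ hfact hα (by simp [hα]) _
    _ = PadicInt.toZMod ((u : ℤ_[p]) ^ n * binomSum p (n : ℤ_[p]) (n - h) (1 - ↑u⁻¹)) := by
        rw [binomSum_pfaff hn, show -1 - (-h - n) = n - h by linear_combination h2]
    _ = _ := by
        rw [map_mul, map_mul, map_binomSum_eq_of_map_eq _ hfact hα.symm (c' := α - h)
          (by simp [hα])]

end PIntegral

theorem sum_gchoose_congr (p : ℕ) (hp : p.Prime) (hodd : Odd p)
    (a t : ℚ) (ha : pInt p a) (ht : pInt p t) (ht0 : ¬ pCong p t 0)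
    (n : ℕ) (hn : n < p) (han : pCong p a n) :
    pCong p
      (∑ k ∈ Finset.range p, gchoose a k * gchoose (-1/2 - a) k * (1 - t) ^ k)
      (t ^ n *
        ∑ k ∈ Finset.range p, gchoose a k * gchoose (a - 1/2) k * (1 - 1/t) ^ k) := by
  have := Fact.mk hp
  obtain ⟨α, hα⟩ := exists_padicInt_coe_eq_of_pInt ha
  obtain ⟨τ, hτ⟩ := exists_padicInt_coe_eq_of_pInt ht
  obtain ⟨h, hh⟩ := exists_padicInt_coe_eq_of_pInt (pInt_one_div_two hodd)
  have hαn : PadicInt.toZMod α = PadicInt.toZMod (n : ℤ_[p]) :=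
    (pCong_iff_toZMod_eq hα (by simp)).mp han
  obtain ⟨u, rfl⟩ : IsUnit τ := PadicInt.isUnit_of_toZMod_ne_zero <| by
    simpa using (pCong_iff_toZMod_eq hτ (y := 0) (by simp)).not.mp ht0
  have h2 : 2 * h = 1 := Subtype.ext <| by
    rw [PadicInt.coe_mul, hh, show ((2 : ℤ_[p]) : ℚ_[p]) = 2 from PadicInt.coe_natCast 2]
    norm_num
  have hinv : ((↑u⁻¹ : ℤ_[p]) : ℚ_[p]) = 1 / t := by
    rw [one_div, ← hτ]
    exact map_units_inv PadicInt.Coe.ringHom u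
  suffices pCong p (binomSum p a (-1/2 - a) (1 - t))
      (t ^ n * binomSum p a (a - 1/2) (1 - 1/t)) by
    simpa only [binomSum, gchoose_eq_choose] using this
  refine (pCong_iff_toZMod_eq ?_ ?_).mpr (PadicInt.toZMod_binomSum_pfaff hn hαn h2 u) <;>
    push_cast [hα, hh, hτ, hinv] <;> ring_nf
end

section
/- Let p be an odd prime and let a, t be p-integral rational numbers with t \not\equiv 0, 1 (mod p). Let \langle a \rangle_p be the residue of a in {0,...,p-1}. Then \sum_{k=0}^{p-1} \binom{a}{k}^2 t^k \equiv t^{\langle a \rangle_p} \sum_{k=0}^{p-1} \binom{a}{k}^2 t^{-k} (mod p). -/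
/-!
Reduction modulo `p` is a ring homomorphism from the `p`-integral rationals onto `𝔽_p`, with
kernel `p ℤ_(p)`. For `k < p` it sends `binom(a, k)` to `binom(n, k)`, since `a ≡ n` and `k!` is a
unit. The congruence thus becomes an identity in `𝔽_p`, namely the palindromy
`∑ binom(n, k)² t^k = t^n ∑ binom(n, k)² t^(-k)`, which is `binom(n, k) = binom(n, n - k)`; the
sums over `k < p` contain all the terms because `n < p`.
-/

open scoped Nat

theorem sum_range_choose_sq_mul_pow_eq {K : Type*} [Field K] {x : K} (hx : x ≠ 0) {n N : ℕ}
    (hn : n < N) :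
    ∑ k ∈ Finset.range N, (n.choose k : K) ^ 2 * x ^ k
      = x ^ n * ∑ k ∈ Finset.range N, (n.choose k : K) ^ 2 * x⁻¹ ^ k := by
  have htrunc (y : K) : ∑ k ∈ Finset.range N, (n.choose k : K) ^ 2 * y ^ k
      = ∑ k ∈ Finset.range (n + 1), (n.choose k : K) ^ 2 * y ^ k := by
    refine (Finset.sum_subset (Finset.range_subset_range.2 hn) fun k _ hk => ?_).symm
    rw [Nat.choose_eq_zero_of_lt (by simpa using hk), Nat.cast_zero, zero_pow two_ne_zero,
      zero_mul]
  rw [htrunc, htrunc, Finset.mul_sum, ← Finset.sum_range_reflect]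
  refine Finset.sum_congr rfl fun k hk => ?_
  have hkn : k ≤ n := Nat.lt_succ_iff.1 (Finset.mem_range.1 hk)
  rw [add_tsub_cancel_right, Nat.choose_symm hkn, pow_sub₀ x hx hkn, inv_pow]
  ring

namespace PIntegral

variable (p : ℕ) [Fact p.Prime]

def subring : Subring ℚ where
  carrier := {r | pInt p r}
  zero_mem' := by simp [pInt, (Fact.out : p.Prime).ne_one]
  one_mem' := by simp [pInt, (Fact.out : p.Prime).ne_one]
  add_mem' {r s} hr hs h :=
    ((Fact.out : p.Prime).dvd_mul.1 (h.trans (Rat.add_den_dvd r s))).elim hr hs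
  mul_mem' {r s} hr hs h :=
    ((Fact.out : p.Prime).dvd_mul.1 (h.trans (Rat.mul_den_dvd r s))).elim hr hs
  neg_mem' {r} hr := by simpa [pInt, Rat.den_neg_eq_den] using hr

variable {p}

theorem cast_den_ne_zero {r : ℚ} (hr : r ∈ subring p) : (r.den : ZMod p) ≠ 0 :=
  mt (ZMod.natCast_eq_zero_iff _ _).1 hr

variable (p) in
def reduce : subring p →+* ZMod p where
  toFun r := ((r : ℚ) : ZMod p)
  map_one' := Rat.cast_one
  map_zero' := Rat.cast_zero
  map_add' r s := Rat.cast_add_of_ne_zero (cast_den_ne_zero r.2) (cast_den_ne_zero s.2)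
  map_mul' r s := Rat.cast_mul_of_ne_zero (cast_den_ne_zero r.2) (cast_den_ne_zero s.2)

theorem reduce_apply (r : subring p) : reduce p r = ((r : ℚ) : ZMod p) := rfl

theorem cast_mul_of_mem {r s : ℚ} (hr : r ∈ subring p) (hs : s ∈ subring p) :
    ((r * s : ℚ) : ZMod p) = r * s :=
  map_mul (reduce p) ⟨r, hr⟩ ⟨s, hs⟩

theorem cast_pow_of_mem {r : ℚ} (hr : r ∈ subring p) (k : ℕ) :
    ((r ^ k : ℚ) : ZMod p) = (r : ZMod p) ^ k :=
  map_pow (reduce p) ⟨r, hr⟩ k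

theorem cast_sub_of_mem {r s : ℚ} (hr : r ∈ subring p) (hs : s ∈ subring p) :
    ((r - s : ℚ) : ZMod p) = r - s :=
  map_sub (reduce p) ⟨r, hr⟩ ⟨s, hs⟩

theorem cast_sum_of_mem {ι : Type*} {s : Finset ι} {f : ι → ℚ}
    (hf : ∀ i ∈ s, f i ∈ subring p) :
    ((∑ i ∈ s, f i : ℚ) : ZMod p) = ∑ i ∈ s, (f i : ZMod p) := by
  have h := map_sum (reduce p) (fun i : s => (⟨f i, hf i i.2⟩ : subring p)) s.attach
  rw [reduce_apply, AddSubmonoidClass.coe_finsetSum, s.sum_attach f] at h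
  exact h.trans (s.sum_attach fun i => (f i : ZMod p))

theorem cast_prod_of_mem {ι : Type*} {s : Finset ι} {f : ι → ℚ}
    (hf : ∀ i ∈ s, f i ∈ subring p) :
    ((∏ i ∈ s, f i : ℚ) : ZMod p) = ∏ i ∈ s, (f i : ZMod p) := by
  have h := map_prod (reduce p) (fun i : s => (⟨f i, hf i i.2⟩ : subring p)) s.attach
  rw [reduce_apply, SubmonoidClass.coe_finsetProd, s.prod_attach f] at h
  exact h.trans (s.prod_attach fun i => (f i : ZMod p))

theorem cast_num_ne_zero {r : ℚ} (h : (r : ZMod p) ≠ 0) : (r.num : ZMod p) ≠ 0 := by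
  intro h0
  rw [Rat.cast_def, h0, zero_div] at h
  exact h rfl

-- The cast of a rational that is not `p`-integral is the junk value `num / 0 = 0`.
theorem inv_mem_of_cast_ne_zero {r : ℚ} (h : (r : ZMod p) ≠ 0) : r⁻¹ ∈ subring p := by
  have hr : r ≠ 0 := by rintro rfl; exact h Rat.cast_zero
  intro hdvd
  rw [Rat.den_inv_of_ne_zero hr] at hdvd
  exact cast_num_ne_zero h ((ZMod.intCast_zmod_eq_zero_iff_dvd _ _).2 (Int.natCast_dvd.2 hdvd))

theorem cast_inv_of_cast_ne_zero {r : ℚ} (h : (r : ZMod p) ≠ 0) :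
    ((r⁻¹ : ℚ) : ZMod p) = (r : ZMod p)⁻¹ :=
  Rat.cast_inv_of_ne_zero (cast_num_ne_zero h)

theorem pCong_iff_cast_eq {r s : ℚ} (hr : r ∈ subring p) (hs : s ∈ subring p) :
    pCong p r s ↔ (r : ZMod p) = s := by
  rw [← sub_eq_zero, ← cast_sub_of_mem hr hs]
  constructor
  · rintro ⟨c, hc, hrs⟩
    rw [hrs, cast_mul_of_mem (natCast_mem _ p) hc, Rat.cast_natCast, ZMod.natCast_self,
      zero_mul]
  · intro h
    set d := r - s
    have hden : ((d.den : ℚ) : ZMod p) ≠ 0 := by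
      rw [Rat.cast_natCast]
      exact cast_den_ne_zero (sub_mem hr hs)
    obtain ⟨m, hm⟩ : (p : ℤ) ∣ d.num := by
      rwa [Rat.cast_def, div_eq_zero_iff, or_iff_left (cast_den_ne_zero (sub_mem hr hs)),
        ZMod.intCast_zmod_eq_zero_iff_dvd] at h
    refine ⟨m * (d.den : ℚ)⁻¹, mul_mem (intCast_mem _ m) (inv_mem_of_cast_ne_zero hden), ?_⟩
    calc d = d.num / d.den := (Rat.num_div_den d).symm
      _ = p * (m * (d.den : ℚ)⁻¹) := by rw [hm]; push_cast; ring

theorem cast_factorial_ne_zero {k : ℕ} (hk : k < p) : ((k ! : ℚ) : ZMod p) ≠ 0 := by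
  rw [Rat.cast_natCast, Ne, ZMod.natCast_eq_zero_iff, (Fact.out : p.Prime).dvd_factorial]
  omega

theorem gchoose_mem {a : ℚ} (ha : a ∈ subring p) {k : ℕ} (hk : k < p) :
    gchoose a k ∈ subring p :=
  mul_mem (prod_mem fun i _ => sub_mem ha (natCast_mem _ i))
    (inv_mem_of_cast_ne_zero (cast_factorial_ne_zero hk))

theorem cast_gchoose {a : ℚ} (ha : a ∈ subring p) {n : ℕ} (han : (a : ZMod p) = n) {k : ℕ}
    (hk : k < p) : (gchoose a k : ZMod p) = n.choose k := by
  have hsub : ∀ i ∈ Finset.range k, a - i ∈ subring p := fun i _ => sub_mem ha (natCast_mem _ i)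
  have hprod : ∏ i ∈ Finset.range k, ((a - i : ℚ) : ZMod p) = n.descFactorial k := by
    rw [← descPochhammer_eval_eq_descFactorial, descPochhammer_eval_eq_prod_range]
    refine Finset.prod_congr rfl fun i _ => ?_
    rw [cast_sub_of_mem ha (natCast_mem _ i), han, Rat.cast_natCast]
  have hfac := cast_factorial_ne_zero hk
  rw [gchoose, div_eq_mul_inv, cast_mul_of_mem (prod_mem hsub) (inv_mem_of_cast_ne_zero hfac),
    cast_inv_of_cast_ne_zero hfac, cast_prod_of_mem hsub, hprod,
    Nat.descFactorial_eq_factorial_mul_choose, Nat.cast_mul, mul_comm, Rat.cast_natCast,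
    inv_mul_cancel_left₀ (by rwa [Rat.cast_natCast] at hfac)]

theorem sum_gchoose_sq_mul_pow_mem {a x : ℚ} (ha : a ∈ subring p) (hx : x ∈ subring p) :
    ∑ k ∈ Finset.range p, gchoose a k ^ 2 * x ^ k ∈ subring p :=
  sum_mem fun k hk => mul_mem (pow_mem (gchoose_mem ha (Finset.mem_range.1 hk)) 2) (pow_mem hx k)

theorem cast_sum_gchoose_sq_mul_pow {a x : ℚ} (ha : a ∈ subring p) (hx : x ∈ subring p)
    {n : ℕ} (han : (a : ZMod p) = n) :
    ((∑ k ∈ Finset.range p, gchoose a k ^ 2 * x ^ k : ℚ) : ZMod p)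
      = ∑ k ∈ Finset.range p, (n.choose k : ZMod p) ^ 2 * (x : ZMod p) ^ k := by
  have hg (k : ℕ) (hk : k ∈ Finset.range p) : gchoose a k ∈ subring p :=
    gchoose_mem ha (Finset.mem_range.1 hk)
  rw [cast_sum_of_mem fun k hk => mul_mem (pow_mem (hg k hk) 2) (pow_mem hx k)]
  refine Finset.sum_congr rfl fun k hk => ?_
  rw [cast_mul_of_mem (pow_mem (hg k hk) 2) (pow_mem hx k), cast_pow_of_mem (hg k hk),
    cast_pow_of_mem hx, cast_gchoose ha han (Finset.mem_range.1 hk)]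

end PIntegral

open PIntegral

theorem sum_gchoose_sq_congr_general (p : ℕ) (hp : p.Prime)
    (a t : ℚ) (ha : pInt p a) (ht : pInt p t)
    (ht0 : ¬ pCong p t 0)
    (n : ℕ) (hn : n < p) (han : pCong p a n) :
    pCong p (∑ k ∈ Finset.range p, gchoose a k ^ 2 * t ^ k)
      (t ^ n * ∑ k ∈ Finset.range p, gchoose a k ^ 2 * (1 / t) ^ k) := by
  have : Fact p.Prime := ⟨hp⟩
  have ht0' : (t : ZMod p) ≠ 0 := by
    rwa [pCong_iff_cast_eq ht (zero_mem _), Rat.cast_zero] at ht0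
  have han' : (a : ZMod p) = n := by
    rwa [pCong_iff_cast_eq ha (natCast_mem _ n), Rat.cast_natCast] at han
  have hinv := inv_mem_of_cast_ne_zero ht0'
  have hsum := sum_gchoose_sq_mul_pow_mem ha hinv
  simp only [one_div]
  rw [pCong_iff_cast_eq (sum_gchoose_sq_mul_pow_mem ha ht) (mul_mem (pow_mem ht n) hsum),
    cast_mul_of_mem (pow_mem ht n) hsum, cast_pow_of_mem ht,
    cast_sum_gchoose_sq_mul_pow ha ht han', cast_sum_gchoose_sq_mul_pow ha hinv han',
    cast_inv_of_cast_ne_zero ht0']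
  exact sum_range_choose_sq_mul_pow_eq ht0' hn

theorem sum_gchoose_sq_congr (p : ℕ) (hp : p.Prime) (hodd : Odd p)
    (a t : ℚ) (ha : pInt p a) (ht : pInt p t)
    (ht0 : ¬ pCong p t 0) (ht1 : ¬ pCong p t 1)
    (n : ℕ) (hn : n < p) (han : pCong p a n) :
    pCong p (∑ k ∈ Finset.range p, gchoose a k ^ 2 * t ^ k)
      (t ^ n * ∑ k ∈ Finset.range p, gchoose a k ^ 2 * (1 / t) ^ k) :=
  sum_gchoose_sq_congr_general p hp a t ha ht ht0 n hn han
end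

section
/- Let p be an odd prime and let a, t be p-integral rationals with t \not\equiv 0, 1 (mod p). Writing n = \langle a \rangle_p for the residue of a modulo p, we have \sum_{k=0}^{p-1} \binom{a}{k}^2 t^k \equiv (t-1)^n P_n((t+1)/(t-1)) (mod p), where P_n is the n-th Legendre polynomial. -/
open Polynomial Finset

/-! The congruence splits into an exact identity and a termwise reduction. Comparing
coefficients shows that `Qₙ(t) = ∑ₖ C(n,k)² tᵏ` satisfies the Legendre recurrence in
homogenized form, `(n+2) Q_{n+2} = (2n+3)(t+1) Q_{n+1} - (n+1)(t-1)² Qₙ`, whence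
`(t-1)ⁿ Pₙ((t+1)/(t-1)) = Qₙ(t)`. On the other side, for `k < p` the denominator `k!` of
`gchoose a k` is a `p`-adic unit, so `a ≡ n` gives `gchoose a k ≡ C(n,k)` termwise, and
`C(n,k) = 0` for `n < k < p`. -/

lemma choose_succ_mul_eq (n j : ℕ) :
    (n.choose (j + 1) : ℚ) * (j + 1) = n.choose j * (n - j) := by
  rcases le_or_gt j n with hj | hj
  · have := Nat.choose_succ_right_eq n j
    rw [← Nat.cast_sub hj]
    exact_mod_cast this
  · simp [Nat.choose_eq_zero_of_lt hj, Nat.choose_eq_zero_of_lt (Nat.lt_succ_of_lt hj)]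

lemma choose_sq_three_term (n j : ℕ) :
    (n : ℚ) * n.choose (j + 1) ^ 2 =
      n.choose (j + 1) * (n.choose (j + 2) + n.choose j) +
        (n + 2) * n.choose (j + 2) * n.choose j := by
  have e1 : (n.choose (j + 1) : ℚ) = n.choose j * (n - j) / (j + 1) := by
    rw [← choose_succ_mul_eq]; field_simp
  have e2 : (n.choose (j + 2) : ℚ) = n.choose (j + 1) * (n - (j + 1)) / (j + 2) := by
    have := choose_succ_mul_eq n (j + 1)
    push_cast at this
    rw [← this]; field_simp; ring
  rw [e2, e1]
  field_simp
  ring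

noncomputable def chooseSqPoly (n : ℕ) : ℚ[X] :=
  ∑ k ∈ range (n + 1), C ((n.choose k : ℚ) ^ 2) * X ^ k

lemma coeff_chooseSqPoly (n k : ℕ) : (chooseSqPoly n).coeff k = (n.choose k : ℚ) ^ 2 := by
  simp only [chooseSqPoly, finsetSum_coeff, coeff_C_mul_X_pow, Finset.sum_ite_eq, mem_range]
  split_ifs with hk
  · rfl
  · simp [Nat.choose_eq_zero_of_lt (by omega : n < k)]

lemma eval_chooseSqPoly {n N : ℕ} (hN : n < N) (t : ℚ) :
    (chooseSqPoly n).eval t = ∑ k ∈ range N, (n.choose k : ℚ) ^ 2 * t ^ k := by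
  have hdeg : (chooseSqPoly n).natDegree ≤ n :=
    natDegree_le_iff_coeff_eq_zero.mpr fun k hk => by
      simp [coeff_chooseSqPoly, Nat.choose_eq_zero_of_lt (by exact_mod_cast hk : n < k)]
  simp only [eval_eq_sum_range' (hdeg.trans_lt hN), coeff_chooseSqPoly]

lemma chooseSqPoly_recurrence (n : ℕ) :
    C ((n : ℚ) + 2) * chooseSqPoly (n + 2) =
      C (2 * (n : ℚ) + 3) * (X + 1) * chooseSqPoly (n + 1) -
        C ((n : ℚ) + 1) * (X - 1) ^ 2 * chooseSqPoly n := by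
  have hsq : (X - 1 : ℚ[X]) ^ 2 = X * X - 2 * X + 1 := by ring
  ext k
  simp only [hsq, coeff_C_mul, mul_assoc, coeff_sub, add_mul, sub_mul, coeff_add, one_mul,
    coeff_ofNat_mul, coeff_chooseSqPoly]
  rcases k with _ | _ | j
  · simp [coeff_chooseSqPoly]; ring
  · simp [coeff_chooseSqPoly]; ring
  · simp only [coeff_X_mul, coeff_chooseSqPoly]
    push_cast [Nat.choose_succ_succ]
    linear_combination (-2) * choose_sq_three_term n j

lemma sub_one_pow_mul_eval_legendreP {t : ℚ} (ht : t ≠ 1) (n : ℕ) :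
    (t - 1) ^ n * (legendreP n).eval ((t + 1) / (t - 1)) = (chooseSqPoly n).eval t := by
  have ht' : t - 1 ≠ 0 := sub_ne_zero.mpr ht
  induction n using Nat.twoStepInduction with
  | zero => simp [legendreP, chooseSqPoly]
  | one => simp [legendreP, chooseSqPoly, Finset.sum_range_succ]; field_simp; ring
  | more n ih₀ ih₁ =>
    have hrec := congrArg (eval t) (chooseSqPoly_recurrence n)
    simp only [eval_mul, eval_sub, eval_add, eval_pow, eval_C, eval_X, eval_one] at hrec
    rw [← ih₀, ← ih₁] at hrec
    have hn2 : (n : ℚ) + 2 ≠ 0 := by positivity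
    apply mul_left_cancel₀ hn2
    rw [hrec, legendreP]
    simp only [eval_mul, eval_sub, eval_C, eval_X]
    field_simp
    ring

lemma gchoose_natCast (n k : ℕ) : gchoose n k = n.choose k := by
  rw [gchoose, ← descPochhammer_eval_eq_prod_range, descPochhammer_eval_eq_descFactorial,
    Nat.choose_eq_descFactorial_div_factorial,
    Nat.cast_div (Nat.factorial_dvd_descFactorial n k) (by positivity)]

section Congruence

variable {p : ℕ}

lemma pInt.neg {r : ℚ} (h : pInt p r) : pInt p (-r) := by
  rwa [pInt, Rat.den_neg_eq_den]

lemma pInt_inv_natCast {m : ℕ} (hm : ¬ p ∣ m) : pInt p (m : ℚ)⁻¹ := by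
  rw [pInt, Rat.inv_natCast_den]
  split_ifs with h
  · exact absurd (h ▸ dvd_zero p) hm
  · exact hm

variable [hp : Fact p.Prime]

lemma pInt.add {r s : ℚ} (hr : pInt p r) (hs : pInt p s) : pInt p (r + s) := fun h =>
  (hp.out.dvd_mul.mp (h.trans (Rat.add_den_dvd r s))).elim hr hs

lemma pInt.mul {r s : ℚ} (hr : pInt p r) (hs : pInt p s) : pInt p (r * s) := fun h =>
  (hp.out.dvd_mul.mp (h.trans (Rat.mul_den_dvd r s))).elim hr hs

variable (p) in
def pIntegers : Subring ℚ where
  carrier := {r | pInt p r}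
  mul_mem' := pInt.mul
  one_mem' := by simp [pInt, hp.out.ne_one]
  add_mem' := pInt.add
  zero_mem' := by simp [pInt, hp.out.ne_one]
  neg_mem' := pInt.neg

lemma mem_pIntegers {r : ℚ} : r ∈ pIntegers p ↔ pInt p r := Iff.rfl

lemma pInt_natCast (m : ℕ) : pInt p m := natCast_mem (pIntegers p) m

lemma pCong.refl (r : ℚ) : pCong p r r := ⟨0, pInt_natCast 0, by simp⟩

lemma pCong.pInt_left {r s : ℚ} (h : pCong p r s) (hs : pInt p s) : pInt p r := by
  obtain ⟨c, hc, he⟩ := h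
  rw [← sub_add_cancel r s, he]
  exact ((pInt_natCast p).mul hc).add hs

lemma pCong.add {r s u v : ℚ} (h : pCong p r s) (h' : pCong p u v) :
    pCong p (r + u) (s + v) := by
  obtain ⟨c, hc, he⟩ := h
  obtain ⟨c', hc', he'⟩ := h'
  exact ⟨c + c', hc.add hc', by linear_combination he + he'⟩

lemma pCong.mul {r s u v : ℚ} (h : pCong p r s) (h' : pCong p u v) (hs : pInt p s)
    (hu : pInt p u) : pCong p (r * u) (s * v) := by
  obtain ⟨c, hc, he⟩ := h
  obtain ⟨c', hc', he'⟩ := h'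
  exact ⟨c * u + s * c', (hc.mul hu).add (hs.mul hc'), by linear_combination u * he + s * he'⟩

lemma pCong.div_natCast {r s : ℚ} (h : pCong p r s) {m : ℕ} (hm : ¬ p ∣ m) :
    pCong p (r / m) (s / m) := by
  obtain ⟨c, hc, he⟩ := h
  exact ⟨c / m, hc.mul (pInt_inv_natCast hm), by rw [← sub_div, he, mul_div_assoc]⟩

lemma pCong.sum {ι : Type*} (s : Finset ι) {f g : ι → ℚ}
    (h : ∀ i ∈ s, pCong p (f i) (g i)) :
    pCong p (∑ i ∈ s, f i) (∑ i ∈ s, g i) := by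
  classical
  induction s using Finset.induction with
  | empty => exact pCong.refl 0
  | insert i s hi ih =>
    rw [sum_insert hi, sum_insert hi]
    exact (h i (mem_insert_self i s)).add (ih fun j hj => h j (mem_insert_of_mem hj))

lemma pCong.prod {ι : Type*} (s : Finset ι) {f g : ι → ℚ} (hf : ∀ i ∈ s, pInt p (f i))
    (hg : ∀ i ∈ s, pInt p (g i)) (h : ∀ i ∈ s, pCong p (f i) (g i)) :
    pCong p (∏ i ∈ s, f i) (∏ i ∈ s, g i) := by
  classical
  induction s using Finset.induction with
  | empty => exact pCong.refl 1
  | insert i s hi ih =>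
    rw [prod_insert hi, prod_insert hi]
    exact (h i (mem_insert_self i s)).mul
      (ih (fun j hj => hf j (mem_insert_of_mem hj)) (fun j hj => hg j (mem_insert_of_mem hj))
        fun j hj => h j (mem_insert_of_mem hj))
      (hg i (mem_insert_self i s))
      (prod_mem fun j hj => hf j (mem_insert_of_mem hj) : _ ∈ pIntegers p)

lemma pCong_gchoose {a : ℚ} {n k : ℕ} (ha : pInt p a) (han : pCong p a n) (hk : k < p) :
    pCong p (gchoose a k) (n.choose k) := by
  have hprod : pCong p (∏ i ∈ range k, (a - i)) (∏ i ∈ range k, ((n : ℚ) - i)) := by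
    refine pCong.prod _ (fun i _ => sub_mem (mem_pIntegers.mpr ha) (natCast_mem _ i))
      (fun i _ => sub_mem (natCast_mem (pIntegers p) n) (natCast_mem _ i)) fun i _ => ?_
    obtain ⟨c, hc, he⟩ := han
    exact ⟨c, hc, by rw [← he]; ring⟩
  rw [← gchoose_natCast]
  exact hprod.div_natCast (by rwa [hp.out.dvd_factorial, not_le])

end Congruence

theorem sum_gchoose_sq_legendre_congr_general (p : ℕ) (hp : p.Prime)
    (a t : ℚ) (ha : pInt p a) (ht : pInt p t)
    (ht1 : ¬ pCong p t 1)
    (n : ℕ) (hn : n < p) (han : pCong p a n) :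
    pCong p (∑ k ∈ Finset.range p, gchoose a k ^ 2 * t ^ k)
      ((t - 1) ^ n * (legendreP n).eval ((t + 1) / (t - 1))) := by
  have := Fact.mk hp
  have ht1' : t ≠ 1 := by
    rintro rfl
    exact ht1 (pCong.refl 1)
  rw [sub_one_pow_mul_eval_legendreP ht1' n, eval_chooseSqPoly hn]
  refine pCong.sum _ fun k hk => ?_
  have hchoose : pInt p (n.choose k) := pInt_natCast _
  have hg := pCong_gchoose ha han (mem_range.mp hk)
  rw [sq, sq]
  exact (hg.mul hg hchoose (hg.pInt_left hchoose)).mul (pCong.refl _) (hchoose.mul hchoose)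
    (pow_mem (mem_pIntegers.mpr ht) k)

theorem sum_gchoose_sq_legendre_congr (p : ℕ) (hp : p.Prime) (hodd : Odd p)
    (a t : ℚ) (ha : pInt p a) (ht : pInt p t)
    (ht0 : ¬ pCong p t 0) (ht1 : ¬ pCong p t 1)
    (n : ℕ) (hn : n < p) (han : pCong p a n) :
    pCong p (∑ k ∈ Finset.range p, gchoose a k ^ 2 * t ^ k)
      ((t - 1) ^ n * (legendreP n).eval ((t + 1) / (t - 1))) :=
  sum_gchoose_sq_legendre_congr_general p hp a t ha ht ht1 n hn han
end
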